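/- If S_{nmij} = C(x)(h_{nj} h_{mi} - h_{ni} h_{mj}) with C = 1 - H², and 𝒟_i h_{mn} = -(2/H) H_i h_{mn}, and 𝒟_i is a derivation commuting with raising indices via a 𝒟-parallel metric tensor, then 𝒟_i S_n{}^k{}_{jm} = -(2/H) H_i (h^k_j h_{mn} - h^k_m h_{jn}). -/

import Mathlib

/-! If `D x = -(2 H⁻¹ D H) x` then `H² x` is `D`-constant, so `(1 - H²) x = x - H² x` has the same
derivative as `x`. The tensor `h^k_j h_{mn} - h^k_m h_{jn}` is of this kind, since `h^k_m` is
`D`-constant and `h_{mn}` scales as required. -/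

namespace Derivation

variable {R A : Type*} [CommSemiring R] [CommRing A] [Algebra R A] (D : Derivation R A A)

theorem map_mul_of_map_eq_zero_left {x y c : A} (hy : D y = 0) (hx : D x = c * x) :
    D (y * x) = c * (y * x) := by
  rw [leibniz, hy, hx, smul_eq_mul, smul_eq_mul]
  ring

theorem map_sub_of_map_eq_mul {x y c : A} (hx : D x = c * x) (hy : D y = c * y) :
    D (x - y) = c * (x - y) := by
  rw [map_sub, hx, hy, mul_sub]

theorem map_sq_mul_eq_zero_of_map_eq {H Hinv x : A} (hHinv : H * Hinv = 1)
    (hx : D x = -(2 * Hinv * D H) * x) : D (H ^ 2 * x) = 0 := by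
  rw [leibniz, leibniz_pow, hx, smul_eq_mul, smul_eq_mul, nsmul_eq_mul]
  linear_combination (-2 * H * x * D H) * hHinv

theorem map_one_sub_sq_mul_of_map_eq {H Hinv x : A} (hHinv : H * Hinv = 1)
    (hx : D x = -(2 * Hinv * D H) * x) : D ((1 - H ^ 2) * x) = D x := by
  rw [one_sub_mul, map_sub, D.map_sq_mul_eq_zero_of_map_eq hHinv hx, sub_zero]

end Derivation

theorem stmt15 {A : Type*} [CommRing A] [Algebra ℝ A] (D : Derivation ℝ A A)
    {ι : Type*} (h hup : ι → ι → A)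
    (H HI Hinv : A) (hHinv : H * Hinv = 1)
    (hDH : D H = HI)
    (hDh : ∀ m n, D (h m n) = -(2 * Hinv * HI) * h m n)
    (hDhup : ∀ k m, D (hup k m) = 0)
    (S : ι → ι → ι → ι → A)
    (hS : ∀ n k j m, S n k j m = (1 - H ^ 2) * (hup k j * h m n - hup k m * h j n)) :
    ∀ n k j m, D (S n k j m) =
      -(2 * Hinv * HI) * (hup k j * h m n - hup k m * h j n) := by
  intro n k j m
  subst hDH
  have hT : D (hup k j * h m n - hup k m * h j n) =
      -(2 * Hinv * D H) * (hup k j * h m n - hup k m * h j n) :=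
    D.map_sub_of_map_eq_mul (D.map_mul_of_map_eq_zero_left (hDhup k j) (hDh m n))
      (D.map_mul_of_map_eq_zero_left (hDhup k m) (hDh j n))
  rw [hS, D.map_one_sub_sq_mul_of_map_eq hHinv hT, hT]
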